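/- arXiv:2410.12688 — 2 statements merged into one kernel-verified Lean document; each statement's English description precedes it below -/
import Mathlib

section
/- Let V be a finite vertex set and N : V → Finset V assign to each vertex v a set of neighbors with v ∉ N(v). If H₁ and H₂ are both clustered neighborhood hypergraphs for N, then for all vertices u, v: u and v are connected in H₁ if and only if u and v are connected in H₂. (α-Invariance of Connected Components: the connected components of the spatial hypergraph model depend only on the points X and degrees d, not on the clustering parameter α.) -/
/-- `H` is a clustered neighborhood hypergraph for the neighbor assignment `N`:
every hyperedge has size at least 2, every hyperedge is `{z} ∪ C` for some center `z`
and nonempty `C ⊆ N z`, and every vertex `v` shares a hyperedge with each of its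
neighbors `u ∈ N v`. -/
def IsClusteredNeighborhoodHypergraph {V : Type*} [DecidableEq V]
    (N : V → Finset V) (H : Set (Finset V)) : Prop :=
  (∀ h ∈ H, 2 ≤ h.card) ∧
  (∀ h ∈ H, ∃ z : V, ∃ C : Finset V, C.Nonempty ∧ C ⊆ N z ∧ h = insert z C) ∧
  (∀ v : V, ∀ u ∈ N v, ∃ h ∈ H, v ∈ h ∧ u ∈ h)

/-- Two vertices are connected in a hypergraph `H` if there is a finite sequence of
vertices from one to the other in which each consecutive pair lies in a common
hyperedge of `H`. -/
def HyperConnected {V : Type*} (H : Set (Finset V)) (u v : V) : Prop :=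
  Relation.ReflTransGen (fun a b => ∃ h ∈ H, a ∈ h ∧ b ∈ h) u v

/-!
Both hypergraphs have the same connectivity as the graph joining each vertex to its neighbors.
Every pair `v, u ∈ N v` shares a hyperedge, so graph paths are hyperpaths; conversely every
hyperedge `{z} ∪ C` is a star around its center `z` in that graph, so any two of its vertices are
joined through `z`.
-/

section

variable {V : Type*} [DecidableEq V]

def neighborGraph (N : V → Finset V) : SimpleGraph V :=
  SimpleGraph.fromRel fun a b => b ∈ N a

lemma neighborGraph_reachable_of_mem {N : V → Finset V} {a b : V} (hb : b ∈ N a) :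
    (neighborGraph N).Reachable a b := by
  by_cases hab : a = b
  · exact hab ▸ .rfl
  · exact SimpleGraph.Adj.reachable ((SimpleGraph.fromRel_adj _ a b).2 ⟨hab, .inl hb⟩)

namespace IsClusteredNeighborhoodHypergraph

variable {N : V → Finset V} {H : Set (Finset V)}

lemma reachable_of_mem_hyperedge (hH : IsClusteredNeighborhoodHypergraph N H)
    {h : Finset V} (hh : h ∈ H) {a b : V} (ha : a ∈ h) (hb : b ∈ h) :
    (neighborGraph N).Reachable a b := by
  obtain ⟨z, C, -, hCN, rfl⟩ := hH.2.1 h hh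
  have from_center : ∀ x ∈ insert z C, (neighborGraph N).Reachable z x := by
    intro x hx
    rcases Finset.mem_insert.1 hx with rfl | hx
    · exact .rfl
    · exact neighborGraph_reachable_of_mem (hCN hx)
  exact (from_center a ha).symm.trans (from_center b hb)

lemma hyperConnected_of_adj (hH : IsClusteredNeighborhoodHypergraph N H) {a b : V}
    (hab : (neighborGraph N).Adj a b) : HyperConnected H a b := by
  obtain ⟨-, hb | ha⟩ := (SimpleGraph.fromRel_adj _ a b).1 hab
  · exact .single (hH.2.2 a b hb)
  · obtain ⟨h, hh, hb, ha⟩ := hH.2.2 b a ha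
    exact .single ⟨h, hh, ha, hb⟩

lemma hyperConnected_iff_reachable (hH : IsClusteredNeighborhoodHypergraph N H) (u v : V) :
    HyperConnected H u v ↔ (neighborGraph N).Reachable u v := by
  constructor
  · refine Relation.reflTransGen_le_of_equivalence_of_le
      (neighborGraph N).reachable_is_equivalence ?_ u v
    rintro a b ⟨h, hh, ha, hb⟩
    exact hH.reachable_of_mem_hyperedge hh ha hb
  · rw [SimpleGraph.reachable_iff_reflTransGen]
    exact Relation.reflTransGen_closed (fun _ _ => hH.hyperConnected_of_adj) u v

end IsClusteredNeighborhoodHypergraph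

end

theorem connected_iff_of_clustered_neighborhood_hypergraphs_general
    {V : Type*} [DecidableEq V]
    (N : V → Finset V)
    (H₁ H₂ : Set (Finset V))
    (h₁ : IsClusteredNeighborhoodHypergraph N H₁)
    (h₂ : IsClusteredNeighborhoodHypergraph N H₂)
    (u v : V) :
    HyperConnected H₁ u v ↔ HyperConnected H₂ u v := by
  rw [h₁.hyperConnected_iff_reachable, h₂.hyperConnected_iff_reachable]

/-- α-invariance of connected components: any two clustered neighborhood hypergraphs
for the same neighbor assignment `N` have the same connectivity relation. -/
theorem connected_iff_of_clustered_neighborhood_hypergraphs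
    {V : Type*} [Fintype V] [DecidableEq V]
    (N : V → Finset V) (hN : ∀ v, v ∉ N v)
    (H₁ H₂ : Set (Finset V))
    (h₁ : IsClusteredNeighborhoodHypergraph N H₁)
    (h₂ : IsClusteredNeighborhoodHypergraph N H₂)
    (u v : V) :
    HyperConnected H₁ u v ↔ HyperConnected H₂ u v :=
  connected_iff_of_clustered_neighborhood_hypergraphs_general N H₁ H₂ h₁ h₂ u v
end

section
/- Let V be a finite vertex set, N : V → Finset V with v ∉ N(v) for all v, and let H₁ and H₂ be clustered neighborhood hypergraphs for N. If u = w₀, w₁, …, w_k = v is a walk in H₁ (each consecutive pair shares a hyperedge of H₁), with z_i the center of a hyperedge of H₁ containing w_i and w_{i+1}, then the sequence u = w₀, z₀, w₁, z₁, …, z_{k−1}, w_k = v is a walk in H₂; in particular, a walk of length k between u and v in H₁ yields a walk of length at most 2k between u and v in H₂. -/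
/-- `w 0, w 1, …, w k` is a walk of length `k` in the hypergraph `H`:
each consecutive pair of vertices lies in a common hyperedge of `H`. -/
def IsHyperWalk {V : Type*} (H : Set (Finset V)) (k : ℕ) (w : ℕ → V) : Prop :=
  ∀ i < k, ∃ h ∈ H, w i ∈ h ∧ w (i + 1) ∈ h

/-- If `w 0, …, w k` is a walk in `H₁` with `z i` the center of a hyperedge of `H₁`
containing `w i` and `w (i+1)`, then the interleaved sequence
`w 0, z 0, w 1, z 1, …, z (k-1), w k` is a walk (of length `2k`) in `H₂`;
in particular a walk of length `k` in `H₁` yields a walk of length at most `2k`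
between the same endpoints in `H₂`. -/
theorem interleaved_walk_in_other_hypergraph
    {V : Type*} [Fintype V] [DecidableEq V]
    (N : V → Finset V) (hN : ∀ v, v ∉ N v)
    (H₁ H₂ : Set (Finset V))
    (h₁ : IsClusteredNeighborhoodHypergraph N H₁)
    (h₂ : IsClusteredNeighborhoodHypergraph N H₂)
    (k : ℕ) (w : ℕ → V) (z : ℕ → V)
    (hwalk : IsHyperWalk H₁ k w)
    (hcenter : ∀ i < k, ∃ C : Finset V, C.Nonempty ∧ C ⊆ N (z i) ∧
      insert (z i) C ∈ H₁ ∧ w i ∈ insert (z i) C ∧ w (i + 1) ∈ insert (z i) C) :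
    (IsHyperWalk H₂ (2 * k) (fun j => if Even j then w (j / 2) else z (j / 2)) ∧
      (fun j => if Even j then w (j / 2) else z (j / 2)) 0 = w 0 ∧
      (fun j => if Even j then w (j / 2) else z (j / 2)) (2 * k) = w k) ∧
    (∃ (m : ℕ) (s : ℕ → V), m ≤ 2 * k ∧ s 0 = w 0 ∧ s m = w k ∧
      IsHyperWalk H₂ m s) := by
  -- For each step, find hyperedges of H₂ joining w i to z i and z i to w (i+1).
  have key : ∀ i < k, ∀ x : V, (x = w i ∨ x = w (i + 1)) →
      ∃ h ∈ H₂, x ∈ h ∧ z i ∈ h := by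
    intro i hi x hx
    obtain ⟨C, hCne, hCN, -, hwi, hwi1⟩ := hcenter i hi
    have hxmem : x ∈ insert (z i) C := by rcases hx with rfl | rfl <;> assumption
    rcases Finset.mem_insert.1 hxmem with rfl | hxC
    · obtain ⟨u, hu⟩ := hCne
      obtain ⟨h, hh, hzh, -⟩ := h₂.2.2 _ u (hCN hu)
      exact ⟨h, hh, hzh, hzh⟩
    · obtain ⟨h, hh, hzh, hxh⟩ := h₂.2.2 (z i) x (hCN hxC)
      exact ⟨h, hh, hxh, hzh⟩
  have main : IsHyperWalk H₂ (2 * k) (fun j => if Even j then w (j / 2) else z (j / 2)) := by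
    intro j hj
    rcases Nat.even_or_odd j with ⟨i, rfl⟩ | ⟨i, rfl⟩
    · have hik : i < k := by omega
      have he : Even (i + i) := ⟨i, rfl⟩
      have hne : ¬ Even (i + i + 1) := by rw [Nat.even_add_one]; exact not_not_intro he
      simp only [if_pos he, if_neg hne, show (i + i) / 2 = i from by omega,
        show (i + i + 1) / 2 = i from by omega]
      obtain ⟨h, hh, hx, hz⟩ := key i hik (w i) (Or.inl rfl)
      exact ⟨h, hh, hx, hz⟩
    · have hik : i < k := by omega
      have hne : ¬ Even (2 * i + 1) := by simp [Nat.even_add_one, parity_simps]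
      have he : Even (2 * i + 1 + 1) := ⟨i + 1, by omega⟩
      simp only [if_neg hne, if_pos he, show (2 * i + 1) / 2 = i from by omega,
        show (2 * i + 1 + 1) / 2 = i + 1 from by omega]
      obtain ⟨h, hh, hx, hz⟩ := key i hik (w (i + 1)) (Or.inr rfl)
      exact ⟨h, hh, hz, hx⟩
  have h0 : (fun j => if Even j then w (j / 2) else z (j / 2)) 0 = w 0 := by norm_num
  have hk : (fun j => if Even j then w (j / 2) else z (j / 2)) (2 * k) = w k := by
    have he : Even (2 * k) := ⟨k, two_mul k⟩
    simp only [if_pos he, show 2 * k / 2 = k from by omega]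
  exact ⟨⟨main, h0, hk⟩, 2 * k, fun j => if Even j then w (j / 2) else z (j / 2), le_refl _, h0, hk, main⟩
end
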